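/- Let M be a loopless matroid of rank r on [n] and let σ be a basis of M. For each i ∈ [n] ∖ σ let C_i denote the fundamental circuit of i with respect to σ, i.e., the unique circuit of M contained in σ ∪ {i}. Define ψ : ℝ^σ → ℝ^n by ψ(u)_j = u_j for j ∈ σ and ψ(u)_i = min{u_j : j ∈ C_i ∖ {i}} for i ∈ [n] ∖ σ. Then ψ is a bijection from ℝ^σ onto the set {w ∈ B̃(M) : σ is a w-maximal basis of M}. -/
import Mathlib


open Finset Pointwise

/-- The 0/1 indicator vector (in `ℝ^n`) of a finite set of coordinates. -/
def indVec {n : ℕ} (S : Finset (Fin n)) : Fin n → ℝ := fun i => if i ∈ S then 1 else 0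

/-- Independence with respect to a family `𝔅` of bases: being contained in a basis. -/
def FamIndep {n : ℕ} (𝔅 : Finset (Finset (Fin n))) (I : Finset (Fin n)) : Prop :=
  ∃ B ∈ 𝔅, I ⊆ B

/-- Circuits of the family `𝔅`: minimal dependent sets. -/
def FamCircuit {n : ℕ} (𝔅 : Finset (Finset (Fin n))) (C : Finset (Fin n)) : Prop :=
  ¬ FamIndep 𝔅 C ∧ ∀ D ⊂ C, FamIndep 𝔅 D

open scoped Classical in
/-- The rank of a set: maximal cardinality of an independent subset. -/
noncomputable def famRk {n : ℕ} (𝔅 : Finset (Finset (Fin n))) (F : Finset (Fin n)) : ℕ :=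
  (F.powerset.filter (fun I => FamIndep 𝔅 I)).sup Finset.card

open scoped Classical in
/-- The bases of the restriction to `F`: the maximal independent subsets of `F`. -/
noncomputable def famRestrictBases {n : ℕ} (𝔅 : Finset (Finset (Fin n)))
    (F : Finset (Fin n)) : Finset (Finset (Fin n)) :=
  F.powerset.filter fun B =>
    FamIndep 𝔅 B ∧ ∀ B' ⊆ F, FamIndep 𝔅 B' → B ⊆ B' → B = B'

open scoped Classical in
/-- The bases of the contraction by `F`: the sets `B \ F` where `B` is a basis meeting `F`
in a set of full rank `rk F`. -/
noncomputable def famContractBases {n : ℕ} (𝔅 : Finset (Finset (Fin n)))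
    (F : Finset (Fin n)) : Finset (Finset (Fin n)) :=
  (𝔅.filter fun B => (B ∩ F).card = famRk 𝔅 F).image (· \ F)

/-- `i` and `j` are related if equal or contained in a common circuit. -/
def FamConnRel {n : ℕ} (𝔅 : Finset (Finset (Fin n))) (i j : Fin n) : Prop :=
  i = j ∨ ∃ C, FamCircuit 𝔅 C ∧ i ∈ C ∧ j ∈ C

/-- Number of connected components: number of classes of the equivalence relation
generated by `FamConnRel`. -/
noncomputable def famNumComponents {n : ℕ} (𝔅 : Finset (Finset (Fin n))) : ℕ :=
  Nat.card (Quot (FamConnRel 𝔅))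

/-- Connectedness of the matroid presented by bases `𝔅` on the ground set `E`:
any two distinct elements of `E` lie in a common circuit (within `E`). -/
def FamConnectedOn {n : ℕ} (𝔅 : Finset (Finset (Fin n))) (E : Finset (Fin n)) : Prop :=
  ∀ i ∈ E, ∀ j ∈ E, i ≠ j → ∃ C, C ⊆ E ∧ FamCircuit 𝔅 C ∧ i ∈ C ∧ j ∈ C

/-- A matroid of rank `r` on the ground set `Fin n`, given by its collection of bases:
`r`-element sets satisfying the basis exchange axiom. -/
structure FinMatroid (n r : ℕ) where
  bases : Finset (Finset (Fin n))
  bases_nonempty : bases.Nonempty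
  card_bases : ∀ B ∈ bases, B.card = r
  exchange : ∀ B₁ ∈ bases, ∀ B₂ ∈ bases, ∀ i ∈ B₁ \ B₂,
      ∃ j ∈ B₂ \ B₁, insert j (B₁.erase i) ∈ bases

namespace FinMatroid

variable {n r : ℕ}

def Indep (M : FinMatroid n r) (I : Finset (Fin n)) : Prop := FamIndep M.bases I

def IsCircuit (M : FinMatroid n r) (C : Finset (Fin n)) : Prop := FamCircuit M.bases C

noncomputable def rk (M : FinMatroid n r) (F : Finset (Fin n)) : ℕ := famRk M.bases F

/-- A flat: no circuit leaves exactly one element outside `F`. -/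
def IsFlat (M : FinMatroid n r) (F : Finset (Fin n)) : Prop :=
  ∀ C, M.IsCircuit C → (C \ F).card ≠ 1

open scoped Classical in
/-- Closure of a set: the intersection of all flats containing it (the smallest flat
containing it). -/
noncomputable def closure (M : FinMatroid n r) (S : Finset (Fin n)) : Finset (Fin n) :=
  Finset.univ.filter fun i => ∀ F, M.IsFlat F → S ⊆ F → i ∈ F

/-- No single element is dependent. -/
def Loopless (M : FinMatroid n r) : Prop := ∀ i : Fin n, M.Indep {i}

noncomputable def numComponents (M : FinMatroid n r) : ℕ := famNumComponents M.bases

/-- Any two distinct elements lie in a common circuit. -/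
def Connected (M : FinMatroid n r) : Prop :=
  ∀ i j : Fin n, i ≠ j → ∃ C, M.IsCircuit C ∧ i ∈ C ∧ j ∈ C

/-- `B` is a `w`-maximal basis of `M`. -/
def IsMaxBasis (M : FinMatroid n r) (w : Fin n → ℝ) (B : Finset (Fin n)) : Prop :=
  B ∈ M.bases ∧ ∀ B' ∈ M.bases, ∑ i ∈ B', w i ≤ ∑ i ∈ B, w i

open scoped Classical in
/-- The bases of the matroid `M_w`: the `w`-maximal bases of `M`. -/
noncomputable def maxBases (M : FinMatroid n r) (w : Fin n → ℝ) :
    Finset (Finset (Fin n)) :=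
  M.bases.filter fun B => ∀ B' ∈ M.bases, ∑ i ∈ B', w i ≤ ∑ i ∈ B, w i

/-- Membership in the Bergman fan: on every circuit the minimum of `w` is attained
at least twice. -/
def InBergmanFan (M : FinMatroid n r) (w : Fin n → ℝ) : Prop :=
  ∀ C, M.IsCircuit C → ∃ i ∈ C, ∃ j ∈ C, i ≠ j ∧ w i = w j ∧ ∀ k ∈ C, w i ≤ w k

/-- The matroid polytope: convex hull of the indicator vectors of the bases. -/
noncomputable def polytope (M : FinMatroid n r) : Set (Fin n → ℝ) :=
  convexHull ℝ (indVec '' ↑M.bases)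

noncomputable def restrictBases (M : FinMatroid n r) (F : Finset (Fin n)) :
    Finset (Finset (Fin n)) :=
  famRestrictBases M.bases F

noncomputable def contractBases (M : FinMatroid n r) (F : Finset (Fin n)) :
    Finset (Finset (Fin n)) :=
  famContractBases M.bases F

/-- `𝓖` is a building set in the lattice of flats of `M` (with bottom element `∅` and
join = closure of union): for every nonempty flat `X`, the join map is an order
isomorphism from the product of the lower intervals of the maximal elements of
`𝓖` below `X` onto the lower interval of `X`. -/
def IsFlatBuilding (M : FinMatroid n r) (𝓖 : Set (Finset (Fin n))) : Prop :=
  (∀ F ∈ 𝓖, M.IsFlat F ∧ F ≠ ∅) ∧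
  ∀ X, M.IsFlat X → X ≠ ∅ →
    ∃ (k : ℕ) (g : Fin k → Finset (Fin n)),
      Function.Injective g ∧
      (∀ i, g i ∈ 𝓖 ∧ g i ⊆ X) ∧
      (∀ i, ∀ H ∈ 𝓖, H ⊆ X → g i ⊆ H → g i = H) ∧
      (∀ H ∈ 𝓖, H ⊆ X → ∃ i, H ⊆ g i) ∧
      ∃ e : (∀ i : Fin k, {F : Finset (Fin n) // M.IsFlat F ∧ F ⊆ g i}) ≃o
              {F : Finset (Fin n) // M.IsFlat F ∧ F ⊆ X},
        ∀ y, (e y).1 = M.closure (Finset.univ.sup fun i => (y i).1)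

/-- `S` is nested with respect to `𝓖` (in the lattice of flats of `M`): `S ⊆ 𝓖` and for
every subcollection of at least two pairwise incomparable members, their join (the
closure of their union) is not in `𝓖`. -/
def IsNested (M : FinMatroid n r) (𝓖 : Set (Finset (Fin n)))
    (S : Finset (Finset (Fin n))) : Prop :=
  ↑S ⊆ 𝓖 ∧ ∀ T ⊆ S, 2 ≤ T.card →
    (∀ A ∈ T, ∀ B ∈ T, A ≠ B → ¬ A ⊆ B ∧ ¬ B ⊆ A) →
    M.closure (T.sup id) ∉ 𝓖

end FinMatroid

/-- A building set in the Boolean lattice of subsets of `Fin r`: for every nonempty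
`X ⊆ [r]`, the union map is an order isomorphism from the product of the lower
intervals of the maximal elements of `𝓕` below `X` onto the lower interval of `X`. -/
def BoolBuilding {r : ℕ} (𝓕 : Set (Finset (Fin r))) : Prop :=
  (∀ F ∈ 𝓕, F ≠ ∅) ∧
  ∀ X : Finset (Fin r), X ≠ ∅ →
    ∃ (k : ℕ) (g : Fin k → Finset (Fin r)),
      Function.Injective g ∧
      (∀ i, g i ∈ 𝓕 ∧ g i ⊆ X) ∧
      (∀ i, ∀ H ∈ 𝓕, H ⊆ X → g i ⊆ H → g i = H) ∧
      (∀ H ∈ 𝓕, H ⊆ X → ∃ i, H ⊆ g i) ∧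
      ∃ e : (∀ i : Fin k, {F : Finset (Fin r) // F ⊆ g i}) ≃o
              {F : Finset (Fin r) // F ⊆ X},
        ∀ y, (e y).1 = Finset.univ.sup fun i => (y i).1

/-- `S` is nested with respect to `𝓕` in the Boolean lattice: for every subcollection
of at least two pairwise incomparable members, their union is not in `𝓕`. -/
def BoolNested {r : ℕ} (𝓕 : Set (Finset (Fin r))) (S : Finset (Finset (Fin r))) : Prop :=
  ↑S ⊆ 𝓕 ∧ ∀ T ⊆ S, 2 ≤ T.card →
    (∀ A ∈ T, ∀ B ∈ T, A ≠ B → ¬ A ⊆ B ∧ ¬ B ⊆ A) →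
    T.sup id ∉ 𝓕

/-- The simplex `Δ_F = conv{e_i : i ∈ F}`. -/
noncomputable def faceSimplex {r : ℕ} (F : Finset (Fin r)) : Set (Fin r → ℝ) :=
  convexHull ℝ ((fun i => (Pi.single i 1 : Fin r → ℝ)) '' ↑F)

/-- The Minkowski sum `Δ_𝓕 = Σ_{F ∈ 𝓕} Δ_F`. -/
noncomputable def minkSum {r : ℕ} (𝓕 : Finset (Finset (Fin r))) : Set (Fin r → ℝ) :=
  ∑ F ∈ 𝓕, faceSimplex F


/-! ## Auxiliary matroid theory developed from the exchange axiom -/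

section Fam
variable {n r : ℕ} {𝔅 : Finset (Finset (Fin n))}

lemma famIndep_subset {I J : Finset (Fin n)} (hI : FamIndep 𝔅 I) (h : J ⊆ I) :
    FamIndep 𝔅 J := by
  obtain ⟨B, hB, hIB⟩ := hI; exact ⟨B, hB, h.trans hIB⟩

lemma famIndep_empty (h : 𝔅.Nonempty) : FamIndep 𝔅 (∅ : Finset (Fin n)) := by
  obtain ⟨B, hB⟩ := h; exact ⟨B, hB, by simp⟩

variable (hcard : ∀ B ∈ 𝔅, B.card = r)
  (hexch : ∀ B₁ ∈ 𝔅, ∀ B₂ ∈ 𝔅, ∀ i ∈ B₁ \ B₂,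
      ∃ j ∈ B₂ \ B₁, insert j (B₁.erase i) ∈ 𝔅)

include hcard in
lemma famIndep_card_le {I : Finset (Fin n)} (hI : FamIndep 𝔅 I) : I.card ≤ r := by
  obtain ⟨B, hB, hIB⟩ := hI
  exact (Finset.card_le_card hIB).trans (hcard B hB).le

include hcard in
lemma famIndep_basis_of_card {I : Finset (Fin n)} (hI : FamIndep 𝔅 I) (h : I.card = r) :
    I ∈ 𝔅 := by
  obtain ⟨B, hB, hIB⟩ := hI
  rwa [Finset.eq_of_subset_of_card_le hIB (by rw [hcard B hB, h])]

include hcard hexch in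
/-- Augmentation from the base exchange axiom. -/
lemma famIndep_aug {I J : Finset (Fin n)} (hI : FamIndep 𝔅 I) (hJ : FamIndep 𝔅 J)
    (hlt : I.card < J.card) : ∃ x ∈ J, x ∉ I ∧ FamIndep 𝔅 (insert x I) := by
  classical
  obtain ⟨B10, hB10, hIB10⟩ := hI
  obtain ⟨B20, hB20, hJB20⟩ := hJ
  set P : Finset (Finset (Fin n) × Finset (Fin n)) :=
    (𝔅 ×ˢ 𝔅).filter (fun p => I ⊆ p.1 ∧ J ⊆ p.2) with hP
  have hPne : P.Nonempty := ⟨(B10, B20), by simp [hP, hB10, hB20, hIB10, hJB20]⟩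
  obtain ⟨p, hp, hmin⟩ := P.exists_min_image
    (fun p => (p.1 \ (I ∪ p.2)).card + (p.2 \ (J ∪ p.1)).card) hPne
  obtain ⟨hpmem, hIp, hJp⟩ : (p.1 ∈ 𝔅 ∧ p.2 ∈ 𝔅) ∧ I ⊆ p.1 ∧ J ⊆ p.2 := by
    simpa [hP, Finset.mem_filter, Finset.mem_product] using hp
  obtain ⟨hp1, hp2⟩ := hpmem
  set B₁ := p.1
  set B₂ := p.2
  -- Step 1 : B₂ ⊆ J ∪ B₁
  have hstep2 : B₂ ⊆ J ∪ B₁ := by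
    by_contra hcon
    obtain ⟨x, hxB₂, hxJB₁⟩ := Finset.not_subset.mp hcon
    have hxB₁ : x ∉ B₁ := fun h => hxJB₁ (Finset.mem_union_right _ h)
    have hxJ : x ∉ J := fun h => hxJB₁ (Finset.mem_union_left _ h)
    obtain ⟨y, hy, hB₂'⟩ := hexch B₂ hp2 B₁ hp1 x (Finset.mem_sdiff.mpr ⟨hxB₂, hxB₁⟩)
    obtain ⟨hyB₁, hyB₂⟩ := Finset.mem_sdiff.mp hy
    set B₂' := insert y (B₂.erase x) with hB₂'def
    have hJB₂' : J ⊆ B₂' := fun z hz =>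
      Finset.mem_insert_of_mem (Finset.mem_erase.mpr ⟨fun h => hxJ (h ▸ hz), hJp hz⟩)
    have hmem' : (B₁, B₂') ∈ P := by
      simp [hP, Finset.mem_filter, Finset.mem_product, hp1, hB₂', hIp, hJB₂']
    have hle := hmin (B₁, B₂') hmem'
    simp only at hle
    -- second term strictly decreases
    have h2 : (B₂' \ (J ∪ B₁)).card < (B₂ \ (J ∪ B₁)).card := by
      have hsub : B₂' \ (J ∪ B₁) ⊆ (B₂ \ (J ∪ B₁)).erase x := by
        intro z hz
        obtain ⟨hz1, hz2⟩ := Finset.mem_sdiff.mp hz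
        rcases Finset.mem_insert.mp hz1 with h | h
        · exact absurd (Finset.mem_union_right _ (h ▸ hyB₁)) hz2
        · obtain ⟨hzx, hzB₂⟩ := Finset.mem_erase.mp h
          exact Finset.mem_erase.mpr ⟨hzx, Finset.mem_sdiff.mpr ⟨hzB₂, hz2⟩⟩
      calc (B₂' \ (J ∪ B₁)).card ≤ ((B₂ \ (J ∪ B₁)).erase x).card := Finset.card_le_card hsub
        _ < (B₂ \ (J ∪ B₁)).card := by
            apply Finset.card_erase_lt_of_mem
            exact Finset.mem_sdiff.mpr ⟨hxB₂, hxJB₁⟩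
    -- first term does not increase
    have h1 : (B₁ \ (I ∪ B₂')).card ≤ (B₁ \ (I ∪ B₂)).card := by
      apply Finset.card_le_card
      intro z hz
      obtain ⟨hz1, hz2⟩ := Finset.mem_sdiff.mp hz
      refine Finset.mem_sdiff.mpr ⟨hz1, fun hcon2 => ?_⟩
      rcases Finset.mem_union.mp hcon2 with h | h
      · exact hz2 (Finset.mem_union_left _ h)
      · have hzx : z ≠ x := fun he => hxB₁ (he ▸ hz1)
        have : z ∈ B₂' := Finset.mem_insert_of_mem (Finset.mem_erase.mpr ⟨hzx, h⟩)
        exact hz2 (Finset.mem_union_right _ this)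
    omega
  -- Step 2 : B₁ ⊆ I ∪ B₂
  have hstep1 : B₁ ⊆ I ∪ B₂ := by
    by_contra hcon
    obtain ⟨x, hxB₁, hxIB₂⟩ := Finset.not_subset.mp hcon
    have hxB₂ : x ∉ B₂ := fun h => hxIB₂ (Finset.mem_union_right _ h)
    have hxI : x ∉ I := fun h => hxIB₂ (Finset.mem_union_left _ h)
    obtain ⟨y, hy, hB₁'⟩ := hexch B₁ hp1 B₂ hp2 x (Finset.mem_sdiff.mpr ⟨hxB₁, hxB₂⟩)
    obtain ⟨hyB₂, hyB₁⟩ := Finset.mem_sdiff.mp hy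
    set B₁' := insert y (B₁.erase x) with hB₁'def
    have hIB₁' : I ⊆ B₁' := fun z hz =>
      Finset.mem_insert_of_mem (Finset.mem_erase.mpr ⟨fun h => hxI (h ▸ hz), hIp hz⟩)
    have hmem' : (B₁', B₂) ∈ P := by
      simp [hP, Finset.mem_filter, Finset.mem_product, hp2, hB₁', hIB₁', hJp]
    have hle := hmin (B₁', B₂) hmem'
    simp only at hle
    have h1 : (B₁' \ (I ∪ B₂)).card < (B₁ \ (I ∪ B₂)).card := by
      have hsub : B₁' \ (I ∪ B₂) ⊆ (B₁ \ (I ∪ B₂)).erase x := by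
        intro z hz
        obtain ⟨hz1, hz2⟩ := Finset.mem_sdiff.mp hz
        rcases Finset.mem_insert.mp hz1 with h | h
        · exact absurd (Finset.mem_union_right _ (h ▸ hyB₂)) hz2
        · obtain ⟨hzx, hzB₁⟩ := Finset.mem_erase.mp h
          exact Finset.mem_erase.mpr ⟨hzx, Finset.mem_sdiff.mpr ⟨hzB₁, hz2⟩⟩
      calc (B₁' \ (I ∪ B₂)).card ≤ ((B₁ \ (I ∪ B₂)).erase x).card := Finset.card_le_card hsub
        _ < (B₁ \ (I ∪ B₂)).card := by
            apply Finset.card_erase_lt_of_mem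
            exact Finset.mem_sdiff.mpr ⟨hxB₁, hxIB₂⟩
    have h2 : (B₂ \ (J ∪ B₁')).card ≤ (B₂ \ (J ∪ B₁)).card := by
      apply Finset.card_le_card
      intro z hz
      obtain ⟨hz1, hz2⟩ := Finset.mem_sdiff.mp hz
      refine Finset.mem_sdiff.mpr ⟨hz1, fun hcon2 => ?_⟩
      rcases Finset.mem_union.mp hcon2 with h | h
      · exact hz2 (Finset.mem_union_left _ h)
      · have hzx : z ≠ x := fun he => hxB₂ (he ▸ hz1)
        have : z ∈ B₁' := Finset.mem_insert_of_mem (Finset.mem_erase.mpr ⟨hzx, h⟩)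
        exact hz2 (Finset.mem_union_right _ this)
    omega
  -- Step 3 : conclude
  by_contra hcon
  push_neg at hcon
  have hJB₁ : ∀ x ∈ J, x ∉ I → x ∉ B₁ := by
    intro x hxJ hxI hxB₁
    exact hcon x hxJ hxI ⟨B₁, hp1, Finset.insert_subset hxB₁ hIp⟩
  have e1 : B₂ \ B₁ = J \ B₁ := by
    apply Finset.Subset.antisymm
    · intro z hz
      obtain ⟨hz1, hz2⟩ := Finset.mem_sdiff.mp hz
      rcases Finset.mem_union.mp (hstep2 hz1) with h | h
      · exact Finset.mem_sdiff.mpr ⟨h, hz2⟩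
      · exact absurd h hz2
    · intro z hz
      obtain ⟨hz1, hz2⟩ := Finset.mem_sdiff.mp hz
      exact Finset.mem_sdiff.mpr ⟨hJp hz1, hz2⟩
  have e2 : B₁ \ B₂ = I \ B₂ := by
    apply Finset.Subset.antisymm
    · intro z hz
      obtain ⟨hz1, hz2⟩ := Finset.mem_sdiff.mp hz
      rcases Finset.mem_union.mp (hstep1 hz1) with h | h
      · exact Finset.mem_sdiff.mpr ⟨h, hz2⟩
      · exact absurd h hz2
    · intro z hz
      obtain ⟨hz1, hz2⟩ := Finset.mem_sdiff.mp hz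
      exact Finset.mem_sdiff.mpr ⟨hIp hz1, hz2⟩
  have ecard : (B₁ \ B₂).card = (B₂ \ B₁).card :=
    Finset.card_sdiff_comm (by rw [hcard B₁ hp1, hcard B₂ hp2])
  have hsub : J ∩ B₁ ⊆ I ∩ B₂ := by
    intro z hz
    obtain ⟨hz1, hz2⟩ := Finset.mem_inter.mp hz
    have hzI : z ∈ I := by
      by_contra hzI
      exact hJB₁ z hz1 hzI hz2
    exact Finset.mem_inter.mpr ⟨hzI, hJp hz1⟩
  have : J.card ≤ I.card := by
    have hJ' : (J ∩ B₁).card + (J \ B₁).card = J.card := Finset.card_inter_add_card_sdiff J B₁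
    have hI' : (I ∩ B₂).card + (I \ B₂).card = I.card := Finset.card_inter_add_card_sdiff I B₂
    have h1 : (J ∩ B₁).card ≤ (I ∩ B₂).card := Finset.card_le_card hsub
    have h2 : (J \ B₁).card = (I \ B₂).card := by rw [← e1, ← e2, ecard]
    omega
  omega

end Fam

section Rk
variable {n r : ℕ} {𝔅 : Finset (Finset (Fin n))}

lemma famRk_exists_achiever (hne : 𝔅.Nonempty) (F : Finset (Fin n)) :
    ∃ I ⊆ F, FamIndep 𝔅 I ∧ I.card = famRk 𝔅 F := by
  classical
  have hfne : (F.powerset.filter (fun I => FamIndep 𝔅 I)).Nonempty :=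
    ⟨∅, by simp [famIndep_empty hne]⟩
  obtain ⟨I, hI, hval⟩ := Finset.exists_mem_eq_sup _ hfne Finset.card
  simp only [Finset.mem_filter, Finset.mem_powerset] at hI
  refine ⟨I, hI.1, hI.2, ?_⟩
  rw [famRk]
  convert hval.symm using 2

lemma le_famRk {I F : Finset (Fin n)} (hIF : I ⊆ F) (hI : FamIndep 𝔅 I) :
    I.card ≤ famRk 𝔅 F := by
  classical
  rw [famRk]
  have hmem : I ∈ F.powerset.filter (fun I => FamIndep 𝔅 I) := by
    simp [Finset.mem_powerset, hIF, hI]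
  convert Finset.le_sup hmem

lemma famRk_le_card (hne : 𝔅.Nonempty) (F : Finset (Fin n)) : famRk 𝔅 F ≤ F.card := by
  obtain ⟨I, hIF, _, hIc⟩ := famRk_exists_achiever hne F
  rw [← hIc]; exact Finset.card_le_card hIF

lemma famRk_mono (hne : 𝔅.Nonempty) {F G : Finset (Fin n)} (h : F ⊆ G) :
    famRk 𝔅 F ≤ famRk 𝔅 G := by
  obtain ⟨I, hIF, hI, hIc⟩ := famRk_exists_achiever hne F
  rw [← hIc]; exact le_famRk (hIF.trans h) hI

lemma famRk_indep {I : Finset (Fin n)} (hne : 𝔅.Nonempty) (hI : FamIndep 𝔅 I) :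
    famRk 𝔅 I = I.card :=
  le_antisymm (famRk_le_card hne I) (le_famRk Finset.Subset.rfl hI)

lemma famIndep_of_rk_eq_card (hne : 𝔅.Nonempty) {F : Finset (Fin n)}
    (h : famRk 𝔅 F = F.card) : FamIndep 𝔅 F := by
  obtain ⟨I, hIF, hI, hIc⟩ := famRk_exists_achiever hne F
  rwa [Finset.eq_of_subset_of_card_le hIF (by omega)] at hI

variable (hne : 𝔅.Nonempty) (hcard : ∀ B ∈ 𝔅, B.card = r)
  (hexch : ∀ B₁ ∈ 𝔅, ∀ B₂ ∈ 𝔅, ∀ i ∈ B₁ \ B₂,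
      ∃ j ∈ B₂ \ B₁, insert j (B₁.erase i) ∈ 𝔅)

include hne hcard hexch in
/-- Extension of an independent subset of `F'` to a maximum-size one. -/
lemma famIndep_extend {F' : Finset (Fin n)} :
    ∀ (k : ℕ) (I : Finset (Fin n)), famRk 𝔅 F' - I.card ≤ k →
    I ⊆ F' → FamIndep 𝔅 I →
    ∃ J, I ⊆ J ∧ J ⊆ F' ∧ FamIndep 𝔅 J ∧ J.card = famRk 𝔅 F' := by
  intro k
  induction k with
  | zero =>
    intro I hk hIF hI
    exact ⟨I, Finset.Subset.rfl, hIF, hI, le_antisymm (le_famRk hIF hI) (by omega)⟩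
  | succ m ih =>
    intro I hk hIF hI
    by_cases hle : famRk 𝔅 F' ≤ I.card
    · exact ⟨I, Finset.Subset.rfl, hIF, hI, le_antisymm (le_famRk hIF hI) hle⟩
    · push_neg at hle
      obtain ⟨J₀, hJ₀F, hJ₀, hJ₀c⟩ := famRk_exists_achiever hne F'
      obtain ⟨x, hxJ₀, hxI, hins⟩ := famIndep_aug hcard hexch hI hJ₀ (by omega)
      have hcard' : (insert x I).card = I.card + 1 := Finset.card_insert_of_notMem hxI
      obtain ⟨J, hJ1, hJ2, hJ3, hJ4⟩ := ih (insert x I) (by omega)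
        (Finset.insert_subset (hJ₀F hxJ₀) hIF) hins
      exact ⟨J, (Finset.subset_insert x I).trans hJ1, hJ2, hJ3, hJ4⟩

include hne hcard hexch in
lemma famRk_submod (A B : Finset (Fin n)) :
    famRk 𝔅 (A ∪ B) + famRk 𝔅 (A ∩ B) ≤ famRk 𝔅 A + famRk 𝔅 B := by
  classical
  obtain ⟨I, hIF, hI, hIc⟩ := famRk_exists_achiever hne (A ∩ B)
  obtain ⟨J, hIJ, hJF, hJ, hJc⟩ := famIndep_extend hne hcard hexch
    (famRk 𝔅 (A ∪ B) - I.card) I le_rfl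
    (hIF.trans (Finset.inter_subset_left.trans Finset.subset_union_left)) hI
  have h1 : (J ∩ A).card ≤ famRk 𝔅 A :=
    le_famRk Finset.inter_subset_right (famIndep_subset hJ Finset.inter_subset_left)
  have h2 : (J ∩ B).card ≤ famRk 𝔅 B :=
    le_famRk Finset.inter_subset_right (famIndep_subset hJ Finset.inter_subset_left)
  have key : (J ∩ A).card + (J ∩ B).card = J.card + (J ∩ (A ∩ B)).card := by
    have h3 : (J ∩ A) ∪ (J ∩ B) = J := by
      rw [← Finset.inter_union_distrib_left]
      exact Finset.inter_eq_left.mpr hJF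
    have h4 : (J ∩ A) ∩ (J ∩ B) = J ∩ (A ∩ B) := by
      ext x; simp [Finset.mem_inter]; tauto
    have h7 := Finset.card_union_add_card_inter (J ∩ A) (J ∩ B)
    rw [h3, h4] at h7
    omega
  have h5 : I ⊆ J ∩ (A ∩ B) := Finset.subset_inter hIJ hIF
  have h6 : I.card ≤ (J ∩ (A ∩ B)).card := Finset.card_le_card h5
  omega

end Rk

section Cl
variable {n r : ℕ} {𝔅 : Finset (Finset (Fin n))}

open scoped Classical in
noncomputable def fcl (𝔅 : Finset (Finset (Fin n))) (S : Finset (Fin n)) : Finset (Fin n) :=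
  Finset.univ.filter (fun x => famRk 𝔅 (insert x S) = famRk 𝔅 S)

lemma mem_fcl_iff {S : Finset (Fin n)} {x : Fin n} :
    x ∈ fcl 𝔅 S ↔ famRk 𝔅 (insert x S) = famRk 𝔅 S := by
  classical
  simp [fcl]

lemma subset_fcl (S : Finset (Fin n)) : S ⊆ fcl 𝔅 S := by
  intro x hx
  rw [mem_fcl_iff, Finset.insert_eq_self.mpr hx]

variable (hne : 𝔅.Nonempty) (hcard : ∀ B ∈ 𝔅, B.card = r)
  (hexch : ∀ B₁ ∈ 𝔅, ∀ B₂ ∈ 𝔅, ∀ i ∈ B₁ \ B₂,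
      ∃ j ∈ B₂ \ B₁, insert j (B₁.erase i) ∈ 𝔅)

include hne hcard hexch in
lemma fcl_mono {S T : Finset (Fin n)} (h : S ⊆ T) : fcl 𝔅 S ⊆ fcl 𝔅 T := by
  intro x hx
  rw [mem_fcl_iff] at hx ⊢
  refine le_antisymm ?_ (famRk_mono hne (Finset.subset_insert x T))
  have hsub := famRk_submod hne hcard hexch T (insert x S)
  have h1 : T ∪ insert x S = insert x T := by
    rw [Finset.union_insert, Finset.union_eq_left.mpr h]
  have h2 : S ⊆ T ∩ insert x S := Finset.subset_inter h (Finset.subset_insert x S)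
  have h3 : famRk 𝔅 S ≤ famRk 𝔅 (T ∩ insert x S) := by
    obtain ⟨I, hIF, hI, hIc⟩ := famRk_exists_achiever hne S
    rw [← hIc]; exact le_famRk (hIF.trans h2) hI
  rw [h1, hx] at hsub
  omega

include hne hcard hexch in
lemma famRk_union_eq_of_subset_fcl {S T : Finset (Fin n)} (h : T ⊆ fcl 𝔅 S) :
    famRk 𝔅 (S ∪ T) = famRk 𝔅 S := by
  classical
  induction T using Finset.induction with
  | empty => rw [Finset.union_empty]
  | @insert a T ha ih =>
    have haS : a ∈ fcl 𝔅 S := h (Finset.mem_insert_self a T)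
    have hT : T ⊆ fcl 𝔅 S := fun z hz => h (Finset.mem_insert_of_mem hz)
    have ih' := ih hT
    have h1 : S ∪ insert a T = insert a (S ∪ T) := Finset.union_insert a S T
    have haST : a ∈ fcl 𝔅 (S ∪ T) :=
      fcl_mono hne hcard hexch Finset.subset_union_left haS
    rw [h1, mem_fcl_iff.mp haST, ih']

include hne hcard hexch in
lemma fcl_trans {S T : Finset (Fin n)} (hT : T ⊆ fcl 𝔅 S) {x : Fin n}
    (hx : x ∈ fcl 𝔅 T) : x ∈ fcl 𝔅 S := by
  rw [mem_fcl_iff]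
  have h1 : x ∈ fcl 𝔅 (S ∪ T) := fcl_mono hne hcard hexch Finset.subset_union_right hx
  have h2 : famRk 𝔅 (insert x (S ∪ T)) = famRk 𝔅 (S ∪ T) := mem_fcl_iff.mp h1
  have h3 : famRk 𝔅 (S ∪ T) = famRk 𝔅 S := famRk_union_eq_of_subset_fcl hne hcard hexch hT
  have h4 : famRk 𝔅 (insert x S) ≤ famRk 𝔅 (insert x (S ∪ T)) :=
    famRk_mono hne (Finset.insert_subset_insert x Finset.subset_union_left)
  have h5 : famRk 𝔅 S ≤ famRk 𝔅 (insert x S) := famRk_mono hne (Finset.subset_insert x S)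
  omega

/-! ### Circuits -/

lemma famCircuit_dep {C : Finset (Fin n)} (hC : FamCircuit 𝔅 C) : ¬ FamIndep 𝔅 C := hC.1

lemma famCircuit_erase_indep {C : Finset (Fin n)} (hC : FamCircuit 𝔅 C) {a : Fin n}
    (ha : a ∈ C) : FamIndep 𝔅 (C.erase a) :=
  hC.2 _ (Finset.erase_ssubset ha)

include hne in
lemma famCircuit_rk {C : Finset (Fin n)} (hC : FamCircuit 𝔅 C) :
    famRk 𝔅 C = C.card - 1 := by
  have hCne : C.Nonempty := by
    rcases Finset.eq_empty_or_nonempty C with h | h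
    · exact absurd (h ▸ famIndep_empty hne) hC.1
    · exact h
  obtain ⟨a, ha⟩ := hCne
  have h1 : (C.erase a).card ≤ famRk 𝔅 C :=
    le_famRk (Finset.erase_subset a C) (famCircuit_erase_indep hC ha)
  rw [Finset.card_erase_of_mem ha] at h1
  have h2 : famRk 𝔅 C ≤ C.card := famRk_le_card hne C
  have h3 : famRk 𝔅 C ≠ C.card := fun h => hC.1 (famIndep_of_rk_eq_card hne h)
  omega

include hne in
lemma famCircuit_mem_fcl_erase {C : Finset (Fin n)} (hC : FamCircuit 𝔅 C) {a : Fin n}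
    (ha : a ∈ C) : a ∈ fcl 𝔅 (C.erase a) := by
  rw [mem_fcl_iff, Finset.insert_erase ha, famCircuit_rk hne hC,
    famRk_indep hne (famCircuit_erase_indep hC ha), Finset.card_erase_of_mem ha]

lemma exists_famCircuit_of_dep {D : Finset (Fin n)} (hD : ¬ FamIndep 𝔅 D) :
    ∃ C ⊆ D, FamCircuit 𝔅 C := by
  classical
  induction D using Finset.strongInduction with
  | _ D ih =>
    by_cases h : ∀ D' ⊂ D, FamIndep 𝔅 D'
    · exact ⟨D, Finset.Subset.rfl, hD, h⟩
    · push_neg at h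
      obtain ⟨D', hsub, hdep⟩ := h
      obtain ⟨C, hCD, hC⟩ := ih D' hsub hdep
      exact ⟨C, hCD.trans hsub.subset, hC⟩

include hne hcard hexch in
/-- Uniqueness of the circuit contained in `σ ∪ {i}` for an independent `σ`. -/
lemma fund_circuit_unique {σ : Finset (Fin n)} (hσ : FamIndep 𝔅 σ) {i : Fin n}
    (_hi : i ∉ σ) {D₁ D₂ : Finset (Fin n)} (h₁ : FamCircuit 𝔅 D₁) (h₂ : FamCircuit 𝔅 D₂)
    (hs₁ : D₁ ⊆ insert i σ) (hs₂ : D₂ ⊆ insert i σ) : D₁ = D₂ := by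
  by_contra hne12
  have hiD₁ : i ∈ D₁ := by
    by_contra h
    exact h₁.1 (famIndep_subset hσ (fun z hz => by
      rcases Finset.mem_insert.mp (hs₁ hz) with h' | h'
      · exact absurd (h' ▸ hz) h
      · exact h'))
  have hiD₂ : i ∈ D₂ := by
    by_contra h
    exact h₂.1 (famIndep_subset hσ (fun z hz => by
      rcases Finset.mem_insert.mp (hs₂ hz) with h' | h'
      · exact absurd (h' ▸ hz) h
      · exact h'))
  have hint : D₁ ∩ D₂ ⊂ D₁ := by
    refine Finset.ssubset_iff_subset_ne.mpr ⟨Finset.inter_subset_left, fun h => ?_⟩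
    have hD₁sub : D₁ ⊆ D₂ := by rw [← h]; exact Finset.inter_subset_right
    exact h₁.1 (h₂.2 _ (Finset.ssubset_iff_subset_ne.mpr ⟨hD₁sub, hne12⟩))
  have hintindep : FamIndep 𝔅 (D₁ ∩ D₂) := h₁.2 _ hint
  have hsubmod := famRk_submod hne hcard hexch D₁ D₂
  rw [famCircuit_rk hne h₁, famCircuit_rk hne h₂, famRk_indep hne hintindep] at hsubmod
  have herase : (D₁ ∪ D₂).erase i ⊆ σ := by
    intro z hz
    obtain ⟨hzi, hzu⟩ := Finset.mem_erase.mp hz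
    rcases Finset.mem_union.mp hzu with h | h
    · rcases Finset.mem_insert.mp (hs₁ h) with h' | h'
      · exact absurd h' hzi
      · exact h'
    · rcases Finset.mem_insert.mp (hs₂ h) with h' | h'
      · exact absurd h' hzi
      · exact h'
  have heraseindep : FamIndep 𝔅 ((D₁ ∪ D₂).erase i) := famIndep_subset hσ herase
  have h6 : ((D₁ ∪ D₂).erase i).card ≤ famRk 𝔅 (D₁ ∪ D₂) :=
    le_famRk (Finset.erase_subset _ _) heraseindep
  rw [Finset.card_erase_of_mem (Finset.mem_union_left _ hiD₁)] at h6
  have hcu := Finset.card_union_add_card_inter D₁ D₂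
  have hd1 : 1 ≤ D₁.card := Finset.card_pos.mpr ⟨i, hiD₁⟩
  have hd2 : 1 ≤ D₂.card := Finset.card_pos.mpr ⟨i, hiD₂⟩
  have hd3 : 1 ≤ (D₁ ∪ D₂).card := Finset.card_pos.mpr ⟨i, Finset.mem_union_left _ hiD₁⟩
  have hintlt : (D₁ ∩ D₂).card < D₁.card := Finset.card_lt_card hint
  omega

end Cl

section Key
variable {n r : ℕ} {𝔅 : Finset (Finset (Fin n))}
variable (hne : 𝔅.Nonempty) (hcard : ∀ B ∈ 𝔅, B.card = r)
  (hexch : ∀ B₁ ∈ 𝔅, ∀ B₂ ∈ 𝔅, ∀ i ∈ B₁ \ B₂,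
      ∃ j ∈ B₂ \ B₁, insert j (B₁.erase i) ∈ 𝔅)

include hne hcard in
lemma famRk_le_r (F : Finset (Fin n)) : famRk 𝔅 F ≤ r := by
  obtain ⟨I, _, hI, hIc⟩ := famRk_exists_achiever hne F
  rw [← hIc]; exact famIndep_card_le hcard hI

include hne hcard hexch in
/-- Exchanging `k ∈ C_i \ {i}` into the basis `σ` gives a basis. -/
lemma fund_exchange {σ : Finset (Fin n)} (hσ : σ ∈ 𝔅) {i : Fin n} (hi : i ∉ σ)
    {Ci : Finset (Fin n)} (hCi : FamCircuit 𝔅 Ci) (hCisub : Ci ⊆ insert i σ)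
    {k : Fin n} (hk : k ∈ Ci.erase i) : insert i (σ.erase k) ∈ 𝔅 := by
  obtain ⟨hki, hkCi⟩ := Finset.mem_erase.mp hk
  have hkσ : k ∈ σ := by
    rcases Finset.mem_insert.mp (hCisub hkCi) with h | h
    · exact absurd h hki
    · exact h
  have hσindep : FamIndep 𝔅 σ := ⟨σ, hσ, Finset.Subset.rfl⟩
  have hr1 : 1 ≤ r := by
    rw [← hcard σ hσ]; exact Finset.card_pos.mpr ⟨k, hkσ⟩
  have hiek : i ∉ σ.erase k := fun h => hi (Finset.mem_of_mem_erase h)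
  have hBc : (insert i (σ.erase k)).card = r := by
    rw [Finset.card_insert_of_notMem hiek, Finset.card_erase_of_mem hkσ, hcard σ hσ]
    omega
  have hBsub : insert i (σ.erase k) ⊆ insert i σ :=
    Finset.insert_subset_insert i (Finset.erase_subset k σ)
  have hBindep : FamIndep 𝔅 (insert i (σ.erase k)) := by
    by_contra hdep
    obtain ⟨D, hDsub, hD⟩ := exists_famCircuit_of_dep hdep
    have hDCi : D = Ci := fund_circuit_unique hne hcard hexch hσindep hi hD hCi
      (hDsub.trans hBsub) hCisub
    have : k ∈ insert i (σ.erase k) := hDsub (hDCi ▸ hkCi)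
    rcases Finset.mem_insert.mp this with h | h
    · exact hki h
    · exact (Finset.notMem_erase k σ) h
  exact famIndep_basis_of_card hcard hBindep hBc

include hne hcard hexch in
/-- Exchange out of a basis along a circuit. -/
lemma basis_circuit_exchange {B : Finset (Fin n)} (hB : B ∈ 𝔅) {D : Finset (Fin n)}
    (hD : FamCircuit 𝔅 D) {i : Fin n} (hiD : i ∈ D) (hiB : i ∈ B) :
    ∃ k ∈ D, k ∉ B ∧ insert k (B.erase i) ∈ 𝔅 := by
  classical
  set X := (B.erase i) ∪ (D.erase i) with hX
  have hBindep : FamIndep 𝔅 B := ⟨B, hB, Finset.Subset.rfl⟩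
  have hiX : i ∈ fcl 𝔅 X :=
    fcl_mono hne hcard hexch Finset.subset_union_right
      (famCircuit_mem_fcl_erase hne hD hiD)
  have hBsub : B ⊆ insert i X := by
    intro z hz
    by_cases hzi : z = i
    · exact hzi ▸ Finset.mem_insert_self i X
    · exact Finset.mem_insert_of_mem
        (Finset.mem_union_left _ (Finset.mem_erase.mpr ⟨hzi, hz⟩))
  have hrX : famRk 𝔅 X = r := by
    have h1 : famRk 𝔅 (insert i X) = famRk 𝔅 X := mem_fcl_iff.mp hiX
    have h2 : r ≤ famRk 𝔅 (insert i X) := by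
      have := le_famRk hBsub hBindep
      rwa [hcard B hB] at this
    have h3 : famRk 𝔅 X ≤ r := famRk_le_r hne hcard X
    omega
  obtain ⟨J, hJ1, hJ2, hJ3, hJ4⟩ := famIndep_extend hne hcard hexch
    (famRk 𝔅 X - (B.erase i).card) (B.erase i) le_rfl Finset.subset_union_left
    (famIndep_subset hBindep (Finset.erase_subset i B))
  rw [hrX] at hJ4
  have hJB : J ∈ 𝔅 := famIndep_basis_of_card hcard hJ3 hJ4
  have hr1 : 1 ≤ r := by rw [← hcard B hB]; exact Finset.card_pos.mpr ⟨i, hiB⟩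
  have hBec : (B.erase i).card = r - 1 := by
    rw [Finset.card_erase_of_mem hiB, hcard B hB]
  have hsd : (J \ (B.erase i)).card = 1 := by
    rw [Finset.card_sdiff_of_subset hJ1, hJ4, hBec]; omega
  obtain ⟨k, hkeq⟩ := Finset.card_eq_one.mp hsd
  have hkJ : k ∈ J ∧ k ∉ B.erase i := by
    have : k ∈ J \ (B.erase i) := hkeq ▸ Finset.mem_singleton_self k
    exact ⟨(Finset.mem_sdiff.mp this).1, (Finset.mem_sdiff.mp this).2⟩
  have hkD : k ∈ D.erase i := by
    rcases Finset.mem_union.mp (hJ2 hkJ.1) with h | h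
    · exact absurd h hkJ.2
    · exact h
  have hki : k ≠ i := (Finset.mem_erase.mp hkD).1
  have hkB : k ∉ B := fun h => hkJ.2 (Finset.mem_erase.mpr ⟨hki, h⟩)
  have hJeq : J = insert k (B.erase i) := by
    apply Finset.Subset.antisymm
    · intro z hz
      by_cases hzB : z ∈ B.erase i
      · exact Finset.mem_insert_of_mem hzB
      · have : z ∈ J \ (B.erase i) := Finset.mem_sdiff.mpr ⟨hz, hzB⟩
        rw [hkeq] at this
        exact Finset.mem_insert.mpr (Or.inl (Finset.mem_singleton.mp this))
    · exact Finset.insert_subset hkJ.1 hJ1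
  exact ⟨k, Finset.mem_of_mem_erase hkD, hkB, hJeq ▸ hJB⟩

end Key


/-- The piecewise-linear map `ψ : ℝ^σ → ℝ^n`: coordinates in `σ` are copied, and the
coordinate of `i ∉ σ` is the minimum of the coordinates over `C i \ {i}` (which is
contained in `σ` for the fundamental circuit `C i`). -/
noncomputable def psiMap {n : ℕ} (σ : Finset (Fin n)) (C : Fin n → Finset (Fin n))
    (u : {i : Fin n // i ∈ σ} → ℝ) : Fin n → ℝ :=
  fun j =>
    if hj : j ∈ σ then u ⟨j, hj⟩
    else sInf {t : ℝ | ∃ (k : Fin n) (hk : k ∈ σ), k ∈ C j ∧ t = u ⟨k, hk⟩}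


section Psi
variable {n : ℕ} {σ : Finset (Fin n)} {C : Fin n → Finset (Fin n)}
  {u : {i : Fin n // i ∈ σ} → ℝ}

lemma psiMap_mem {j : Fin n} (hj : j ∈ σ) : psiMap σ C u j = u ⟨j, hj⟩ := dif_pos hj

lemma psiMap_eq_min' {j : Fin n} (hj : j ∉ σ) (hsub : (C j).erase j ⊆ σ)
    (hne : ((C j).erase j).Nonempty) :
    psiMap σ C u j
      = (((C j).erase j).image (fun k => psiMap σ C u k)).min'
          (hne.image _) := by
  classical
  have hset : {t : ℝ | ∃ (k : Fin n) (hk : k ∈ σ), k ∈ C j ∧ t = u ⟨k, hk⟩}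
      = ↑(((C j).erase j).image (fun k => psiMap σ C u k)) := by
    ext t
    simp only [Set.mem_setOf_eq, Finset.coe_image, Set.mem_image, Finset.mem_coe,
      Finset.mem_erase]
    constructor
    · rintro ⟨k, hk, hkC, rfl⟩
      exact ⟨k, ⟨fun he => hj (he ▸ hk), hkC⟩, (psiMap_mem (C:=C) (u:=u) hk)⟩
    · rintro ⟨k, ⟨hkj, hkC⟩, rfl⟩
      have hkσ : k ∈ σ := hsub (Finset.mem_erase.mpr ⟨hkj, hkC⟩)
      exact ⟨k, hkσ, hkC, (psiMap_mem (C:=C) (u:=u) hkσ)⟩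
  have h1 : psiMap σ C u j
      = sInf {t : ℝ | ∃ (k : Fin n) (hk : k ∈ σ), k ∈ C j ∧ t = u ⟨k, hk⟩} := dif_neg hj
  rw [h1, hset]
  exact Finset.Nonempty.csInf_eq_min' _

lemma psiMap_le {j : Fin n} (hj : j ∉ σ) (hsub : (C j).erase j ⊆ σ)
    (hne : ((C j).erase j).Nonempty) {k : Fin n} (hk : k ∈ (C j).erase j) :
    psiMap σ C u j ≤ psiMap σ C u k := by
  rw [psiMap_eq_min' hj hsub hne]
  exact Finset.min'_le _ _ (Finset.mem_image_of_mem _ hk)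

lemma psiMap_attains {j : Fin n} (hj : j ∉ σ) (hsub : (C j).erase j ⊆ σ)
    (hne : ((C j).erase j).Nonempty) :
    ∃ k ∈ (C j).erase j, psiMap σ C u j = psiMap σ C u k := by
  have hmem := Finset.min'_mem (((C j).erase j).image (fun k => psiMap σ C u k))
    (hne.image _)
  obtain ⟨k, hk, heq⟩ := Finset.mem_image.mp hmem
  exact ⟨k, hk, (psiMap_eq_min' hj hsub hne).trans heq.symm⟩

end Psi

/-- For a loopless matroid `M`, a basis `σ`, and the fundamental
circuits `C i` (`i ∉ σ`), the map `ψ` is a bijection from `ℝ^σ` onto the set of points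
of the Bergman fan for which `σ` is a maximal basis. -/
theorem statement18 {n r : ℕ} (M : FinMatroid n r) (hM : M.Loopless)
    (σ : Finset (Fin n)) (hσ : σ ∈ M.bases)
    (C : Fin n → Finset (Fin n))
    (hC : ∀ i ∉ σ, M.IsCircuit (C i) ∧ C i ⊆ insert i σ ∧ i ∈ C i) :
    Set.BijOn (psiMap σ C) Set.univ
      {w : Fin n → ℝ | M.InBergmanFan w ∧ M.IsMaxBasis w σ} := by
  classical
  set 𝔅 := M.bases with h𝔅
  have hne : 𝔅.Nonempty := M.bases_nonempty
  have hcard : ∀ B ∈ 𝔅, B.card = r := M.card_bases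
  have hexch : ∀ B₁ ∈ 𝔅, ∀ B₂ ∈ 𝔅, ∀ i ∈ B₁ \ B₂,
      ∃ j ∈ B₂ \ B₁, insert j (B₁.erase i) ∈ 𝔅 := M.exchange
  have hσindep : FamIndep 𝔅 σ := ⟨σ, hσ, Finset.Subset.rfl⟩
  -- basic facts about the fundamental circuits
  have hKsub : ∀ i ∉ σ, (C i).erase i ⊆ σ := by
    intro i hi k hk
    obtain ⟨hki, hkC⟩ := Finset.mem_erase.mp hk
    rcases Finset.mem_insert.mp ((hC i hi).2.1 hkC) with h | h
    · exact absurd h hki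
    · exact h
  have hKne : ∀ i ∉ σ, ((C i).erase i).Nonempty := by
    intro i hi
    rw [Finset.nonempty_iff_ne_empty]
    intro hemp
    have hsub : C i ⊆ {i} := by
      intro z hz
      by_cases hzi : z = i
      · exact hzi ▸ Finset.mem_singleton_self i
      · exact absurd (Finset.mem_erase.mpr ⟨hzi, hz⟩) (by rw [hemp]; exact Finset.notMem_empty z)
    exact (hC i hi).1.1 (famIndep_subset (hM i) hsub)
  -- key property P of any psi image
  have hP : ∀ (u : {x : Fin n // x ∈ σ} → ℝ), ∀ i ∉ σ, ∀ k ∈ (C i).erase i,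
      psiMap σ C u i ≤ psiMap σ C u k := by
    intro u i hi k hk
    exact psiMap_le hi (hKsub i hi) (hKne i hi) hk
  have hAtt : ∀ (u : {x : Fin n // x ∈ σ} → ℝ), ∀ i ∉ σ,
      ∃ k ∈ (C i).erase i, psiMap σ C u i = psiMap σ C u k := by
    intro u i hi
    exact psiMap_attains hi (hKsub i hi) (hKne i hi)
  constructor
  · -- MapsTo
    intro u _
    set w := psiMap σ C u with hw
    have hwP : ∀ i ∉ σ, ∀ k ∈ (C i).erase i, w i ≤ w k := hP u
    constructor
    · -- Bergman fan
      intro D hD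
      have hDne : D.Nonempty := by
        rcases Finset.eq_empty_or_nonempty D with h | h
        · exact absurd (h ▸ famIndep_empty hne) hD.1
        · exact h
      obtain ⟨a, haD, hamin⟩ := D.exists_min_image w hDne
      suffices hj : ∃ j ∈ D, j ≠ a ∧ w j = w a by
        obtain ⟨j, hjD, hja, hwja⟩ := hj
        exact ⟨a, haD, j, hjD, fun h => hja h.symm, hwja.symm, hamin⟩
      by_contra hno
      push_neg at hno
      have hlt : ∀ j ∈ D, j ≠ a → w a < w j := fun j hj hja =>
        lt_of_le_of_ne (hamin j hj) (fun h => hno j hj hja h.symm)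
      set S := σ.filter (fun k => w a < w k) with hS
      have hSσ : S ⊆ σ := Finset.filter_subset _ _
      have hSindep : FamIndep 𝔅 S := famIndep_subset hσindep hSσ
      have hclaim1 : D.erase a ⊆ fcl 𝔅 S := by
        intro j hj
        obtain ⟨hja, hjD⟩ := Finset.mem_erase.mp hj
        have hwj : w a < w j := hlt j hjD hja
        by_cases hjσ : j ∈ σ
        · exact subset_fcl S (Finset.mem_filter.mpr ⟨hjσ, hwj⟩)
        · have hCsubS : (C j).erase j ⊆ S := by
            intro k hk
            have hkσ : k ∈ σ := hKsub j hjσ hk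
            exact Finset.mem_filter.mpr ⟨hkσ, lt_of_lt_of_le hwj (hwP j hjσ k hk)⟩
          exact fcl_mono hne hcard hexch hCsubS
            (famCircuit_mem_fcl_erase hne (hC j hjσ).1 (hC j hjσ).2.2)
      have hclaim2 : a ∉ fcl 𝔅 S := by
        intro hafcl
        by_cases haσ : a ∈ σ
        · have haS : a ∉ S := fun h => lt_irrefl _ (Finset.mem_filter.mp h).2
          have h1 : famRk 𝔅 (insert a S) = famRk 𝔅 S := mem_fcl_iff.mp hafcl
          have h2 : FamIndep 𝔅 (insert a S) :=
            famIndep_subset hσindep (Finset.insert_subset haσ hSσ)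
          rw [famRk_indep hne h2, famRk_indep hne hSindep,
            Finset.card_insert_of_notMem haS] at h1
          omega
        · have haS : a ∉ S := fun h => haσ (hSσ h)
          have h1 : famRk 𝔅 (insert a S) = famRk 𝔅 S := mem_fcl_iff.mp hafcl
          have hdep : ¬ FamIndep 𝔅 (insert a S) := by
            intro hindep
            rw [famRk_indep hne hindep, famRk_indep hne hSindep,
              Finset.card_insert_of_notMem haS] at h1
            omega
          obtain ⟨D', hD'sub, hD'⟩ := exists_famCircuit_of_dep hdep
          have hD'σ : D' ⊆ insert a σ :=
            hD'sub.trans (Finset.insert_subset_insert a hSσ)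
          have hD'eq : D' = C a := fund_circuit_unique hne hcard hexch hσindep haσ
            hD' (hC a haσ).1 hD'σ (hC a haσ).2.1
          obtain ⟨k₀, hk₀, hk₀eq⟩ := hAtt u a haσ
          have hk₀S : k₀ ∈ S := by
            have : k₀ ∈ insert a S := hD'sub (hD'eq ▸ Finset.mem_of_mem_erase hk₀)
            rcases Finset.mem_insert.mp this with h | h
            · exact absurd h (Finset.mem_erase.mp hk₀).1
            · exact h
          have hlt2 : w a < w k₀ := (Finset.mem_filter.mp hk₀S).2
          have heq2 : w a = w k₀ := hk₀eq
          rw [heq2] at hlt2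
          exact lt_irrefl _ hlt2
      exact hclaim2 (fcl_trans hne hcard hexch hclaim1
        (famCircuit_mem_fcl_erase hne hD haD))
    · -- maximal basis
      refine ⟨hσ, ?_⟩
      have main : ∀ m, ∀ B ∈ 𝔅, (B \ σ).card ≤ m →
          ∑ x ∈ B, w x ≤ ∑ x ∈ σ, w x := by
        intro m
        induction m with
        | zero =>
          intro B hB hBm
          have hBsub : B ⊆ σ := by
            intro z hz
            by_contra hzσ
            have : z ∈ B \ σ := Finset.mem_sdiff.mpr ⟨hz, hzσ⟩
            have := Finset.card_pos.mpr ⟨z, this⟩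
            omega
          rw [Finset.eq_of_subset_of_card_le hBsub (by rw [hcard B hB, hcard σ hσ])]
        | succ m ih =>
          intro B hB hBm
          by_cases hle : (B \ σ).card ≤ m
          · exact ih B hB hle
          · have hpos : 0 < (B \ σ).card := by omega
            obtain ⟨i, hiBσ⟩ := Finset.card_pos.mp hpos
            obtain ⟨hiB, hiσ⟩ := Finset.mem_sdiff.mp hiBσ
            obtain ⟨k, hkD, hkB, hB'⟩ := basis_circuit_exchange hne hcard hexch hB
              (hC i hiσ).1 (hC i hiσ).2.2 hiB
            have hki : k ≠ i := fun h => hkB (h ▸ hiB)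
            have hkK : k ∈ (C i).erase i := Finset.mem_erase.mpr ⟨hki, hkD⟩
            have hkσ : k ∈ σ := hKsub i hiσ hkK
            have hwik : w i ≤ w k := hwP i hiσ k hkK
            set B' := insert k (B.erase i) with hB'def
            have hkBe : k ∉ B.erase i := fun h => hkB (Finset.mem_of_mem_erase h)
            have hsum1 : ∑ x ∈ B', w x = w k + ∑ x ∈ B.erase i, w x :=
              Finset.sum_insert hkBe
            have hsum2 : ∑ x ∈ B.erase i, w x + w i = ∑ x ∈ B, w x :=
              Finset.sum_erase_add B w hiB
            have hBB' : ∑ x ∈ B, w x ≤ ∑ x ∈ B', w x := by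
              rw [hsum1, ← hsum2]; linarith
            have hB'card : (B' \ σ).card ≤ m := by
              have hset : B' \ σ = (B \ σ).erase i := by
                rw [hB'def]
                ext z
                simp only [Finset.mem_sdiff, Finset.mem_erase, Finset.mem_insert]
                constructor
                · rintro ⟨h1 | ⟨h1a, h1b⟩, h2⟩
                  · exact absurd (h1 ▸ hkσ) h2
                  · exact ⟨h1a, h1b, h2⟩
                · rintro ⟨h1, h2, h3⟩
                  exact ⟨Or.inr ⟨h1, h2⟩, h3⟩
              rw [hset, Finset.card_erase_of_mem hiBσ]
              omega
            exact hBB'.trans (ih B' hB' hB'card)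
      intro B' hB'
      exact main (B' \ σ).card B' hB' le_rfl
  constructor
  · -- InjOn
    intro u₁ _ u₂ _ heq
    funext p
    have h := congrFun heq p.1
    rw [psiMap_mem p.2, psiMap_mem p.2] at h
    exact h
  · -- SurjOn
    intro w hw
    obtain ⟨hfan, hσB, hmax⟩ := hw
    refine ⟨fun p => w p.1, Set.mem_univ _, ?_⟩
    funext j
    by_cases hj : j ∈ σ
    · exact psiMap_mem hj
    · -- step (i): w j ≤ w k for every k ∈ (C j).erase j
      have hle : ∀ k ∈ (C j).erase j, w j ≤ w k := by
        intro k hk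
        have hkσ : k ∈ σ := hKsub j hj hk
        have hB' : insert j (σ.erase k) ∈ 𝔅 :=
          fund_exchange hne hcard hexch hσ hj (hC j hj).1 (hC j hj).2.1 hk
        have hjek : j ∉ σ.erase k := fun h => hj (Finset.mem_of_mem_erase h)
        have hsum1 : ∑ x ∈ insert j (σ.erase k), w x = w j + ∑ x ∈ σ.erase k, w x :=
          Finset.sum_insert hjek
        have hsum2 : ∑ x ∈ σ.erase k, w x + w k = ∑ x ∈ σ, w x :=
          Finset.sum_erase_add σ w hkσ
        have := hmax _ hB'
        rw [hsum1, ← hsum2] at this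
        linarith
      -- step (ii): some k ∈ (C j).erase j has w k = w j
      have hex : ∃ k ∈ (C j).erase j, w k = w j := by
        obtain ⟨p, hpC, q, hqC, hpq, hwpq, hpmin⟩ := hfan (C j) (hC j hj).1
        by_cases hpj : p = j
        · have hqj : q ≠ j := fun h => hpq (hpj.trans h.symm)
          refine ⟨q, Finset.mem_erase.mpr ⟨hqj, hqC⟩, ?_⟩
          rw [← hwpq, hpj]
        · refine ⟨p, Finset.mem_erase.mpr ⟨hpj, hpC⟩, ?_⟩
          exact le_antisymm (hpmin j (hC j hj).2.2)
            (hle p (Finset.mem_erase.mpr ⟨hpj, hpC⟩))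
      -- conclude
      set u : {x : Fin n // x ∈ σ} → ℝ := fun p => w p.1 with hu
      obtain ⟨k₀, hk₀, hk₀eq⟩ := hAtt u j hj
      have hpk₀ : psiMap σ C u k₀ = w k₀ := psiMap_mem (hKsub j hj hk₀)
      obtain ⟨k₁, hk₁, hk₁eq⟩ := hex
      have hpk₁ : psiMap σ C u k₁ = w k₁ := psiMap_mem (hKsub j hj hk₁)
      have h1 : psiMap σ C u j ≤ w j := by
        have := psiMap_le (u := u) hj (hKsub j hj) (hKne j hj) hk₁
        rw [hpk₁, hk₁eq] at this
        exact this
      have h2 : w j ≤ psiMap σ C u j := by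
        rw [hk₀eq, hpk₀]
        exact hle k₀ hk₀
      exact le_antisymm h1 h2
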